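/- arXiv:math/0312408 — 3 statements merged into one kernel-verified Lean document; each statement's English description precedes it below -/
import Mathlib

section
/- Let R be a commutative local ring whose residue field is infinite, let n ≤ m be natural numbers, and let (v_1, …, v_k) be a unimodular frame in R^m with n ≥ k + 1. Then there exists a vector v lying in the submodule of R^m spanned by the standard basis vectors e_1, …, e_n such that (v, v_1, …, v_k) is a unimodular frame in R^m. -/
/-!
Over a local ring a family `w_1, …, w_K` in `R^m` is a unimodular frame iff its reduction
modulo the maximal ideal is linearly independent over the residue field. Indeed, being a frame
means that the matrix `A` with rows `w_i` has a right inverse, and a right inverse `B̄` of the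
reduction `Ā` lifts to one of `A`: for any lift `B`, `det (A * B)` reduces to `1`, so it is a
unit. Now the reductions of `e_1, …, e_n` are `n > k` independent vectors, so one of them, `ē_i`,
is not in the span of `v̄_1, …, v̄_k`, and then `(e_i, v_1, …, v_k)` is a frame.
-/

namespace HS

variable {R : Type} [CommRing R] {m : ℕ}

/-- A tuple of vectors in `R^m` is a *unimodular frame* if the vectors are linearly independent
and their span is a direct summand of `R^m` (i.e. they form a basis of a free direct summand). -/
def IsUnimodularFrame {K : ℕ} (v : Fin K → (Fin m → R)) : Prop :=
  LinearIndependent R v ∧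
    ∃ W : Submodule R (Fin m → R), IsCompl (Submodule.span R (Set.range v)) W

/-- The `i`-th standard basis vector of `R^m`. -/
def stdBasis (i : Fin m) : Fin m → R := Pi.single i 1

end HS

open IsLocalRing

theorem LinearMap.isCompl_range_ker_of_comp_eq_id {R M N : Type*} [Ring R] [AddCommGroup M]
    [Module R M] [AddCommGroup N] [Module R N] {f : N →ₗ[R] M} {g : M →ₗ[R] N}
    (h : g ∘ₗ f = LinearMap.id) : IsCompl (range f) (ker g) := by
  have hgf (y : N) : g (f y) = y := LinearMap.congr_fun h y
  have hidem : IsIdempotentElem (f ∘ₗ g) := by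
    ext x : 1
    simp [Module.End.mul_apply, hgf]
  have hrange : range (f ∘ₗ g) = range f :=
    range_comp_of_range_eq_top f (range_eq_top.2 fun y => ⟨f y, hgf y⟩)
  have hker : ker (f ∘ₗ g) = ker g :=
    ker_comp_of_ker_eq_bot g (ker_eq_bot.2 (Function.LeftInverse.injective hgf))
  simpa only [hrange, hker] using IsIdempotentElem.isCompl hidem

theorem Matrix.exists_mul_eq_one_of_map_mul_eq_one {R S ι κ : Type*} [CommRing R] [CommRing S]
    [Fintype ι] [DecidableEq ι] [Fintype κ] (f : R →+* S) [IsLocalHom f]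
    (hf : Function.Surjective f) (A : Matrix ι κ R) {B : Matrix κ ι S} (hB : A.map f * B = 1) :
    ∃ C : Matrix κ ι R, A * C = 1 := by
  choose C hC using fun j i => hf (B j i)
  have hmap : (Matrix.of C).map f = B := Matrix.ext hC
  have hdet : IsUnit (A * Matrix.of C).det := by
    refine isUnit_of_map_unit f _ ?_
    rw [RingHom.map_det, RingHom.mapMatrix_apply, Matrix.map_mul, hmap, hB, Matrix.det_one]
    exact isUnit_one
  exact ⟨Matrix.of C * (A * Matrix.of C)⁻¹,
    by rw [← Matrix.mul_assoc, Matrix.mul_nonsing_inv _ hdet]⟩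

theorem LinearIndependent.exists_notMem_span_of_card_lt {K V ι ι' : Type*} [Field K]
    [AddCommGroup V] [Module K V] [Fintype ι] [Fintype ι'] {e : ι → V}
    (he : LinearIndependent K e) (v : ι' → V) (hcard : Fintype.card ι' < Fintype.card ι) :
    ∃ i, e i ∉ Submodule.span K (Set.range v) := by
  have := FiniteDimensional.span_of_finite K (Set.finite_range v)
  by_contra! h
  have hle : Submodule.span K (Set.range e) ≤ Submodule.span K (Set.range v) :=
    Submodule.span_le.2 (Set.range_subset_iff.2 h)
  have hrank := Submodule.finrank_mono hle
  rw [finrank_span_eq_card he] at hrank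
  exact (hrank.trans (finrank_range_le_card v)).not_gt hcard

namespace HS

variable {R : Type} [CommRing R] {K m : ℕ}

theorem isUnimodularFrame_of_mul_eq_one {w : Fin K → Fin m → R} {C : Matrix (Fin m) (Fin K) R}
    (hC : Matrix.of w * C = 1) : IsUnimodularFrame w := by
  have hid : C.vecMulLinear ∘ₗ (Matrix.of w).vecMulLinear = LinearMap.id := by
    refine LinearMap.ext fun x => ?_
    simp [Matrix.vecMul_vecMul, hC]
  refine ⟨?_, LinearMap.ker C.vecMulLinear, ?_⟩
  · exact Matrix.vecMul_injective_iff.1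
      (Function.LeftInverse.injective (g := C.vecMulLinear) (LinearMap.congr_fun hid))
  · have := LinearMap.isCompl_range_ker_of_comp_eq_id hid
    rwa [range_vecMulLinear] at this

theorem IsUnimodularFrame.exists_mul_eq_one {w : Fin K → Fin m → R} (hw : IsUnimodularFrame w) :
    ∃ C : Matrix (Fin m) (Fin K) R, Matrix.of w * C = 1 := by
  classical
  obtain ⟨hli, W, hW⟩ := hw
  let b := Module.Basis.span hli
  let g := b.equivFun.toLinearMap ∘ₗ (Submodule.span R (Set.range w)).projectionOnto W hW
  have hg (i : Fin K) : g (w i) = Pi.single i 1 := by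
    have hb : (b i : Fin m → R) = w i := by rw [Module.Basis.span_apply]
    change b.equivFun (_ : Submodule.span R (Set.range w)) = _
    rw [← hb, Submodule.projectionOnto_apply_left,
      Module.Basis.equivFun_apply, b.repr_self, Finsupp.single_eq_pi_single]
  refine ⟨(LinearMap.toMatrix' g).transpose, Matrix.ext fun i j => ?_⟩
  calc (Matrix.of w * (LinearMap.toMatrix' g).transpose) i j
        = (LinearMap.toMatrix' g).mulVec (w i) j := by
        simp [Matrix.mul_apply, Matrix.mulVec, dotProduct, mul_comm]
    _ = (1 : Matrix (Fin K) (Fin K) R) i j := by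
        rw [LinearMap.toMatrix'_mulVec, hg, Matrix.one_eq_pi_single]

theorem isUnimodularFrame_iff_exists_mul_eq_one (w : Fin K → Fin m → R) :
    IsUnimodularFrame w ↔ ∃ C : Matrix (Fin m) (Fin K) R, Matrix.of w * C = 1 :=
  ⟨IsUnimodularFrame.exists_mul_eq_one, fun ⟨_, hC⟩ => isUnimodularFrame_of_mul_eq_one hC⟩

theorem isUnimodularFrame_iff_linearIndependent {F : Type} [Field F] (w : Fin K → Fin m → F) :
    IsUnimodularFrame w ↔ LinearIndependent F w :=
  ⟨And.left, fun h => ⟨h, Submodule.exists_isCompl _⟩⟩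

theorem isUnimodularFrame_iff_linearIndependent_residue [IsLocalRing R]
    (w : Fin K → Fin m → R) :
    IsUnimodularFrame w ↔ LinearIndependent (ResidueField R) fun i => residue R ∘ w i := by
  rw [← isUnimodularFrame_iff_linearIndependent, isUnimodularFrame_iff_exists_mul_eq_one,
    isUnimodularFrame_iff_exists_mul_eq_one]
  constructor
  · rintro ⟨C, hC⟩
    have := congrArg (Matrix.map · (residue R)) hC
    rw [Matrix.map_mul, Matrix.map_one _ (map_zero _) (map_one _)] at this
    exact ⟨_, this⟩
  · rintro ⟨B, hB⟩
    exact Matrix.exists_mul_eq_one_of_map_mul_eq_one (residue R) residue_surjective _ hB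

theorem residue_comp_stdBasis [IsLocalRing R] (i : Fin m) :
    residue R ∘ stdBasis i = Pi.single i 1 := by
  ext j
  simp [stdBasis, Pi.single_apply, apply_ite]

end HS

open HS in
theorem exists_extension_of_unimodular_frame_general
    (R : Type) [CommRing R] [IsLocalRing R]
    (n m : ℕ) (hnm : n ≤ m) (k : ℕ) (hk : k + 1 ≤ n)
    (v : Fin k → (Fin m → R)) (hv : IsUnimodularFrame v) :
    ∃ u : Fin m → R,
      u ∈ Submodule.span R (Set.range fun i : Fin n => stdBasis (R := R) (Fin.castLE hnm i)) ∧
      IsUnimodularFrame (Fin.cons u v) := by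
  have hv' := (isUnimodularFrame_iff_linearIndependent_residue v).1 hv
  have he : LinearIndependent (ResidueField R) (Pi.basisFun _ (Fin m) ∘ Fin.castLE hnm) :=
    (Pi.basisFun _ (Fin m)).linearIndependent.comp _ (Fin.castLE_injective hnm)
  obtain ⟨i, hi⟩ := he.exists_notMem_span_of_card_lt (fun j => residue R ∘ v j)
    (by simp only [Fintype.card_fin]; omega)
  refine ⟨stdBasis (Fin.castLE hnm i), Submodule.subset_span ⟨i, rfl⟩, ?_⟩
  rw [isUnimodularFrame_iff_linearIndependent_residue, ← Function.comp_def (residue R ∘ ·),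
    Fin.comp_cons, residue_comp_stdBasis, ← Pi.basisFun_apply]
  exact hv'.finCons hi

open HS in
/-- For a local ring `R` with infinite residue field and `n ≤ m`: any unimodular frame
`(v_1, …, v_k)` in `R^m` with `n ≥ k + 1` can be extended by a vector `v` lying in the span of
the first `n` standard basis vectors `e_1, …, e_n` so that `(v, v_1, …, v_k)` is again a
unimodular frame. -/
theorem exists_extension_of_unimodular_frame
    (R : Type) [CommRing R] [IsLocalRing R] [Infinite (IsLocalRing.ResidueField R)]
    (n m : ℕ) (hnm : n ≤ m) (k : ℕ) (hk : k + 1 ≤ n)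
    (v : Fin k → (Fin m → R)) (hv : IsUnimodularFrame v) :
    ∃ u : Fin m → R,
      u ∈ Submodule.span R (Set.range fun i : Fin n => stdBasis (R := R) (Fin.castLE hnm i)) ∧
      IsUnimodularFrame (Fin.cons u v) :=
  exists_extension_of_unimodular_frame_general R n m hnm k hk v hv
end

section
/- Let k be a field, let R be a commutative local ring whose residue field is infinite, let ι be a nonempty finite index set, and for each i ∈ ι let S_i be a k-algebra, φ_i : R → S_i a ring homomorphism, and n_i ≥ 1, t_i ≥ 1 integers. Let B = ⊗_{i∈ι} S_i^{⊗ n_i} (all tensor products over k), on which each unit r ∈ R^× acts k-linearly by r · ⊗_{i∈ι}(a_{1,i} ⊗ ⋯ ⊗ a_{n_i,i}) = ⊗_{i∈ι}(φ_i(r)^{t_i} a_{1,i} ⊗ ⋯ ⊗ φ_i(r)^{t_i} a_{n_i,i}). Then the module of coinvariants H_0(R^×, B) vanishes; equivalently, the k-submodule of B spanned by the elements r·b − b, for r ∈ R^× and b ∈ B, is all of B. -/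
/-!
A unit `r` acts as left multiplication by `u r = ⨂ᵢ ⨂ⱼ φᵢ(r)^{tᵢ}`, which lies in the commutative
subring `A` generated by the pure tensors `⨂ᵢ ⨂ⱼ φᵢ(pᵢⱼ)`. The span of the `u r * b - b` contains
`y * b` for every `y` in the ideal of `A` generated by the `u r - 1`, so it suffices that this ideal
is the unit ideal. Otherwise all `u r` map to `1` in a field `A ⧸ 𝔪`, where `u r` is a product of
values `f l r` of ring homomorphisms `f l : R →+* A ⧸ 𝔪`. Take a minimal nonempty family of ring
homomorphisms whose product is trivial on `Rˣ`. Expanding `∏ l, f l (1 + a) = 1` over subsets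
gives a linear relation between the characters `∏ l ∈ T, f l` of `Rˣ`, valid for all units `a`
outside finitely many residue classes. Since the residue field is infinite, Artin's independence
argument still applies and shows that the coefficients of the trivial character sum to zero,
whereas by minimality the only such character is the full product, with coefficient `1`.
-/

open Filter
open scoped TensorProduct IsMulCommutative

open Classical in
theorem MonoidHom.sum_filter_eq_zero_of_eventually_sum_mul_eq_zero {G K ι : Type*} [Group G]
    [CommRing K] [IsDomain K] {F : Filter G} [F.NeBot] (hF : ∀ g : G, Tendsto (g * ·) F F)
    (χ : ι → G →* K) (ψ : G →* K) (c : ι → K) (u : Finset ι)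
    (h : ∀ᶠ a in F, ∑ i ∈ u, c i * χ i a = 0) :
    ∑ i ∈ u with χ i = ψ, c i = 0 := by
  induction u using Finset.strongInduction generalizing c with
  | H u ih =>
  by_cases hψ : ∃ j ∈ u, χ j ≠ ψ
  · obtain ⟨j, hj, hjψ⟩ := hψ
    obtain ⟨g, hg⟩ : ∃ g, χ j g ≠ ψ g := by
      by_contra! h
      exact hjψ (MonoidHom.ext h)
    -- subtracting `χ j g` times the relation from its translate by `g` eliminates `χ j`
    have hshift : ∀ᶠ a in F, ∑ i ∈ u.erase j, c i * (χ i g - χ j g) * χ i a = 0 := by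
      filter_upwards [(hF g).eventually h, h] with a hga ha
      rw [Finset.sum_erase _ (by simp)]
      calc ∑ i ∈ u, c i * (χ i g - χ j g) * χ i a
          = ∑ i ∈ u, c i * χ i (g * a) - χ j g * ∑ i ∈ u, c i * χ i a := by
            simp only [map_mul, Finset.mul_sum, ← Finset.sum_sub_distrib]
            exact Finset.sum_congr rfl fun i _ => by ring
        _ = 0 := by rw [hga, ha, mul_zero, sub_zero]
    have hsum := ih _ (Finset.erase_ssubset hj) _ hshift
    rw [Finset.filter_erase, Finset.sum_erase _ (by simp)] at hsum
    have hfactor : (∑ i ∈ u with χ i = ψ, c i) * (ψ g - χ j g) = 0 := by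
      rw [Finset.sum_mul, ← hsum]
      exact Finset.sum_congr rfl fun i hi => by rw [(Finset.mem_filter.mp hi).2]
    exact (mul_eq_zero.mp hfactor).resolve_right (sub_ne_zero.mpr hg.symm)
  · push Not at hψ
    obtain ⟨a, ha⟩ := h.exists
    have hψa : ψ a ≠ 0 := ((Group.isUnit a).map ψ).ne_zero
    rw [Finset.filter_true_of_mem hψ]
    refine (mul_eq_zero.mp ?_).resolve_right hψa
    rw [Finset.sum_mul, ← ha]
    exact Finset.sum_congr rfl fun i hi => by rw [hψ i hi]

theorem Submodule.span_mul_sub_eq_top_of_ideal_span_eq_top {k A B G : Type*} [Semiring k]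
    [CommRing A] [Ring B] [Module k B] (ρ : A →+* B) (u : G → A)
    (h : Ideal.span (Set.range fun g => u g - 1) = ⊤) :
    Submodule.span k {x | ∃ g b, ρ (u g) * b - b = x} = ⊤ := by
  set M := Submodule.span k {x | ∃ g b, ρ (u g) * b - b = x}
  have key : ∀ y ∈ Ideal.span (Set.range fun g => u g - 1), ∀ b, ρ y * b ∈ M := by
    intro y hy
    induction hy using Submodule.span_induction with
    | mem y hy =>
      obtain ⟨g, rfl⟩ := hy
      exact fun b => Submodule.subset_span ⟨g, b, by rw [map_sub, map_one, sub_mul, one_mul]⟩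
    | zero => exact fun b => by rw [map_zero, zero_mul]; exact M.zero_mem
    | add y z _ _ hy hz => exact fun b => by rw [map_add, add_mul]; exact M.add_mem (hy b) (hz b)
    | smul a y _ hy => exact fun b => by rw [smul_eq_mul, mul_comm, map_mul, mul_assoc]; exact hy _
  refine Submodule.eq_top_iff'.mpr fun b => ?_
  simpa using key 1 (h ▸ Submodule.mem_top) b

namespace IsLocalRing

variable (R : Type*) [CommRing R] [IsLocalRing R]

noncomputable def unitsResidueCofinite : Filter Rˣ :=
  comap (fun a : Rˣ => residue R a) cofinite

instance [Infinite (ResidueField R)] : (unitsResidueCofinite R).NeBot := by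
  refine comap_neBot fun s hs => ?_
  obtain ⟨x, hxs, hx0⟩ := ((eventually_mem_set.mpr hs).and (eventually_cofinite_ne 0)).exists
  obtain ⟨r, rfl⟩ := residue_surjective x
  exact ⟨((residue_ne_zero_iff_isUnit r).mp hx0).unit, hxs⟩

theorem tendsto_mul_left_unitsResidueCofinite (g : Rˣ) :
    Tendsto (g * ·) (unitsResidueCofinite R) (unitsResidueCofinite R) := by
  have hg : residue R g ≠ 0 := (residue_ne_zero_iff_isUnit _).mpr g.isUnit
  refine tendsto_comap_iff.mpr ?_
  have : (fun a : Rˣ => residue R a) ∘ (g * ·) =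
      (residue R g * ·) ∘ fun a : Rˣ => residue R a := by
    ext a
    simp
  rw [this]
  exact ((mul_right_injective₀ hg).tendsto_cofinite).comp tendsto_comap

theorem eventually_isUnit_one_add :
    ∀ᶠ a : Rˣ in unitsResidueCofinite R, IsUnit (1 + (a : R)) := by
  filter_upwards [(eventually_cofinite_ne (-1)).comap _] with a ha
  rw [← residue_ne_zero_iff_isUnit, map_add, map_one]
  exact fun h => ha (eq_neg_of_add_eq_zero_right h)

open Classical in
theorem exists_prod_ringHom_apply_ne_one [Infinite (ResidueField R)] {K Λ : Type*} [CommRing K]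
    [IsDomain K] (f : Λ → R →+* K) {s : Finset Λ} (hs : s.Nonempty) :
    ∃ r : Rˣ, ∏ l ∈ s, f l r ≠ 1 := by
  induction s using Finset.strongInduction with
  | H s ih =>
  by_contra! hs1
  let χ : Finset Λ → Rˣ →* K := fun t => ∏ l ∈ t, (f l : R →* K).comp (Units.coeHom R)
  have hχ : ∀ t a, χ t a = ∏ l ∈ t, f l a := fun t a => by simp [χ]
  -- expanding `∏ l ∈ s, f l (1 + a) = 1` over the subsets of `s`
  have hrel : ∀ᶠ a in unitsResidueCofinite R, ∑ t ∈ s.powerset.erase ∅, 1 * χ t a = 0 := by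
    filter_upwards [eventually_isUnit_one_add R] with a ha
    have h1 := hs1 ha.unit
    simp only [IsUnit.unit_spec, map_add, map_one, add_comm (1 : K), Finset.prod_add,
      Finset.prod_const_one, mul_one] at h1
    rw [← Finset.add_sum_erase _ _ (Finset.empty_mem_powerset s), Finset.prod_empty] at h1
    simp only [one_mul, hχ]
    exact add_eq_left.mp h1
  have hχs : χ s = 1 := MonoidHom.ext fun r => by simpa [hχ] using hs1 r
  have hsum := MonoidHom.sum_filter_eq_zero_of_eventually_sum_mul_eq_zero
    (tendsto_mul_left_unitsResidueCofinite R) χ 1 _ _ hrel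
  have hs_mem : s ∈ s.powerset.erase ∅ :=
    Finset.mem_erase.mpr ⟨hs.ne_empty, Finset.mem_powerset_self s⟩
  -- by minimality of `s`, no proper nonempty subset has trivial character
  have hsingle : ∀ t ∈ s.powerset.erase ∅, χ t = 1 ↔ t = s := by
    intro t ht
    obtain ⟨ht0, hts⟩ := Finset.mem_erase.mp ht
    refine ⟨fun h => ?_, fun h => h ▸ hχs⟩
    by_contra hne
    obtain ⟨r, hr⟩ := ih t ((Finset.mem_powerset.mp hts).ssubset_of_ne hne)
      (Finset.nonempty_iff_ne_empty.mpr ht0)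
    exact hr (by rw [← hχ, h, MonoidHom.one_apply])
  rw [Finset.filter_congr hsingle, Finset.filter_eq', if_pos hs_mem, Finset.sum_singleton] at hsum
  exact one_ne_zero hsum

theorem span_mul_sub_eq_top [Infinite (ResidueField R)] {k A B Q : Type*} [Semiring k]
    [CommRing A] [Ring B] [Module k B] [Fintype Q] (ρ : A →+* B) (f : Q → R →+* A) (t : Q → ℕ)
    (ht : ∃ q, t q ≠ 0) :
    Submodule.span k {x | ∃ (r : Rˣ) (b : B), ρ (∏ q, f q r ^ t q) * b - b = x} = ⊤ := by
  refine Submodule.span_mul_sub_eq_top_of_ideal_span_eq_top ρ (fun r : Rˣ => ∏ q, f q r ^ t q) ?_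
  by_contra hI
  obtain ⟨𝔪, h𝔪, hle⟩ := Ideal.exists_le_maximal _ hI
  obtain ⟨q, hq⟩ := ht
  have : Nonempty (Σ q, Fin (t q)) := ⟨⟨q, ⟨0, Nat.pos_of_ne_zero hq⟩⟩⟩
  obtain ⟨r, hr⟩ := exists_prod_ringHom_apply_ne_one R
    (fun x : Σ q, Fin (t q) => (Ideal.Quotient.mk 𝔪).comp (f x.1)) Finset.univ_nonempty
  have h1 : Ideal.Quotient.mk 𝔪 (∏ q, f q r ^ t q) = 1 := by
    rw [← map_one (Ideal.Quotient.mk 𝔪), Ideal.Quotient.eq]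
    exact hle (Ideal.subset_span ⟨r, rfl⟩)
  apply hr
  simpa [Fintype.prod_sigma] using h1

end IsLocalRing

namespace PiTensorProduct

theorem map_mulLeft {R ι : Type*} {A : ι → Type*} [CommSemiring R] [∀ i, Semiring (A i)]
    [∀ i, Algebra R (A i)] (a : ∀ i, A i) :
    map (fun i => LinearMap.mulLeft R (a i)) = LinearMap.mulLeft R (tprod R a) := by
  ext x
  simp only [LinearMap.compMultilinearMap_apply, map_tprod, LinearMap.mulLeft_apply,
    tprod_mul_tprod]
  rfl

variable {k R ι : Type*} [CommRing k] [CommRing R] (κ : ι → Type*) {S : ι → Type*}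
  [∀ i, Ring (S i)] [∀ i, Algebra k (S i)] (φ : ∀ i, R →+* S i)

-- `Algebra.to_smulCommClass` does not fire here: its `SMul` agrees with
-- `PiTensorProduct.instSMul` on nested tensor products only up to unfolding.
instance : SMulCommClass k (⨂[k] i, ⨂[k] (_ : κ i), S i) (⨂[k] i, ⨂[k] (_ : κ i), S i) :=
  ⟨(Algebra.to_smulCommClass (R := k) (A := ⨂[k] i, ⨂[k] (_ : κ i), S i)).smul_comm⟩

theorem map_map_mulLeft (a : ∀ i, S i) :
    (map fun i => map fun _ : κ i => LinearMap.mulLeft k (a i)) =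
      LinearMap.mulLeft k (tprod k fun i => tprod k fun _ : κ i => a i) := by
  simp only [map_mulLeft]

variable (k) in
noncomputable def nestedTprod : ((Σ i, κ i) → R) →* ⨂[k] i, ⨂[k] (_ : κ i), S i where
  toFun p := tprod k fun i => tprod k fun j => φ i (p ⟨i, j⟩)
  map_one' := by simp [one_def]; rfl
  map_mul' p q := by
    simp only [Pi.mul_apply, map_mul, tprod_mul_tprod]
    congr; ext i; rw [Pi.mul_apply, tprod_mul_tprod]; rfl

variable (k) in
noncomputable def pureTensorSubring : Subring (⨂[k] i, ⨂[k] (_ : κ i), S i) :=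
  Subring.closure (Set.range (nestedTprod k κ φ))

instance : IsMulCommutative (pureTensorSubring k κ φ) :=
  Subring.isMulCommutative_closure <| by
    rintro _ ⟨p, rfl⟩ _ ⟨q, rfl⟩
    rw [← map_mul, ← map_mul, mul_comm]

variable (k) in
noncomputable def slotEmbedding [DecidableEq ι] [∀ i, DecidableEq (κ i)] (q : Σ i, κ i) :
    R →+* ⨂[k] i, ⨂[k] (_ : κ i), S i :=
  ((singleAlgHom q.1).comp (singleAlgHom (A := fun _ : κ q.1 => S q.1) q.2)).toRingHom.comp
    (φ q.1)

theorem slotEmbedding_apply [DecidableEq ι] [∀ i, DecidableEq (κ i)] (q : Σ i, κ i) (c : R) :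
    slotEmbedding k κ φ q c = nestedTprod k κ φ (Pi.mulSingle q c) := by
  have hcurry : (fun i j => φ i ((Pi.mulSingle q c : (Σ i, κ i) → R) ⟨i, j⟩)) =
      Pi.mulSingle q.1 (Pi.mulSingle q.2 (φ q.1 c)) := by
    rw [← Sigma.curry_mulSingle (γ := fun i _ => S i)]
    ext i j
    exact Pi.apply_mulSingle (fun x : Σ i, κ i => φ x.1) (fun x => map_one _) q c ⟨i, j⟩
  simp only [slotEmbedding, nestedTprod, RingHom.comp_apply, AlgHom.toRingHom_eq_coe,
    RingHom.coe_coe, AlgHom.comp_apply, singleAlgHom_apply, MonoidHom.mulSingle_apply,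
    MonoidHom.coe_mk, OneHom.coe_mk]
  congr 1
  ext i
  rw [congrFun hcurry i]
  exact (Pi.apply_mulSingle (fun i => tprod k) (fun i => one_def.symm) q.1 _ i).symm

variable (k) in
noncomputable def slotRingHom [DecidableEq ι] [∀ i, DecidableEq (κ i)] (q : Σ i, κ i) :
    R →+* pureTensorSubring k κ φ :=
  (slotEmbedding k κ φ q).codRestrict _ fun c =>
    slotEmbedding_apply (k := k) κ φ q c ▸ Subring.subset_closure (Set.mem_range_self _)

theorem coe_prod_slotRingHom [DecidableEq ι] [∀ i, DecidableEq (κ i)] [Fintype ι]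
    [∀ i, Fintype (κ i)] (x : (Σ i, κ i) → R) :
    ((∏ q, slotRingHom k κ φ q (x q) : pureTensorSubring k κ φ) : ⨂[k] i, ⨂[k] (_ : κ i), S i) =
      nestedTprod k κ φ x := by
  let W := (nestedTprod k κ φ).codRestrict (pureTensorSubring k κ φ) fun p =>
    Subring.subset_closure ⟨p, rfl⟩
  have hslot : ∀ q c, slotRingHom k κ φ q c = W (Pi.mulSingle q c) :=
    fun q c => Subtype.ext (slotEmbedding_apply (k := k) κ φ q c)
  simp only [hslot, ← map_prod, Finset.univ_prod_mulSingle]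
  rfl

end PiTensorProduct

/-- **(Lemma 3.1, first part.)** Let `k` be a field, `R` a local ring with infinite residue
field, and for each `i` in a nonempty finite index set let `S i` be a `k`-algebra,
`φ i : R → S i` a ring homomorphism and `n i, t i ≥ 1`. Let each unit `r ∈ R^×` act on
`B = ⊗_{i} (S i)^{⊗ n i}` by multiplying every tensor factor in the `i`-th slot by
`φ i (r) ^ t i`. Then the coinvariants `H_0(R^×, B)` vanish: the `k`-span of the elements
`r · b − b` is all of `B`. -/
theorem coinvariants_tensor_algebras_eq_top
    (k : Type) [Field k]
    (R : Type) [CommRing R] [IsLocalRing R] [Infinite (IsLocalRing.ResidueField R)]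
    (ι : Type) [Fintype ι] [Nonempty ι]
    (S : ι → Type) [∀ i, Ring (S i)] [∀ i, Algebra k (S i)]
    (φ : ∀ i, R →+* S i) (n t : ι → ℕ) (hn : ∀ i, 1 ≤ n i) (ht : ∀ i, 1 ≤ t i) :
    Submodule.span k
      {x : ⨂[k] i, (⨂[k] (_ : Fin (n i)), S i) |
        ∃ (r : Rˣ) (b : ⨂[k] i, (⨂[k] (_ : Fin (n i)), S i)),
          (PiTensorProduct.map fun i =>
            PiTensorProduct.map fun _ : Fin (n i) =>
              LinearMap.mulLeft k ((φ i (r : R)) ^ t i)) b - b = x} = ⊤ := by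
  classical
  let A := PiTensorProduct.pureTensorSubring k (fun i => Fin (n i)) φ
  let f := PiTensorProduct.slotRingHom k (fun i => Fin (n i)) φ
  have hact (r : Rˣ) : (PiTensorProduct.map fun i => PiTensorProduct.map fun _ : Fin (n i) =>
        LinearMap.mulLeft k (φ i r ^ t i)) =
      LinearMap.mulLeft k (A.subtype (∏ q, f q r ^ t q.1)) := by
    simp only [A, f, ← map_pow, Subring.coe_subtype, PiTensorProduct.coe_prod_slotRingHom,
      PiTensorProduct.map_map_mulLeft]
    rfl
  simp only [hact, LinearMap.mulLeft_apply]
  obtain ⟨i⟩ := ‹Nonempty ι›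
  exact IsLocalRing.span_mul_sub_eq_top R A.subtype f (fun q => t q.1)
    ⟨⟨i, ⟨0, hn i⟩⟩, Nat.one_le_iff_ne_zero.mp (ht i)⟩
end

section
/- Let k be a field, let R be a commutative local ring whose residue field is infinite, let ι be a nonempty finite index set, and for each i ∈ ι let S_i be a k-algebra, φ_i : R → S_i a ring homomorphism, t_i ≥ 1 an integer, P_i and Q_i S_i-modules, and n_{i,1}, n_{i,2} ≥ 0 integers with n_{i,1} + n_{i,2} ≥ 1. Let M = ⊗_{i∈ι} ( Λ^{n_{i,1}}_k P_i ⊗_k V_{n_{i,2}}(Q_i) ), where R^× acts k-linearly so that r ∈ R^× acts on each factor coming from P_i and from Q_i as multiplication by φ_i(r)^{t_i} (inducing the diagonal action on the exterior power Λ^{n_{i,1}}_k P_i and on the symmetric tensors V_{n_{i,2}}(Q_i)). Then the group homology H_l(R^×, M) vanishes for all l ≥ 0. -/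
open scoped TensorProduct

namespace HS
open CategoryTheory

variable (k : Type) [CommRing k] (G : Type) [Group G]

/-- The submodule of a representation generated by the elements `g • a - a`. -/
def coinvariantsKer (A : Rep.{0} k G) : Submodule k A :=
  Submodule.span k {x | ∃ (g : G) (a : A), A.ρ g a - a = x}

lemma coinvariantsKer_le_comap {A B : Rep.{0} k G} (f : A ⟶ B) :
    coinvariantsKer k G A ≤ (coinvariantsKer k G B).comap f.hom.toLinearMap := by
  rw [coinvariantsKer, Submodule.span_le]
  rintro x ⟨g, a, rfl⟩
  refine Submodule.mem_comap.2 (Submodule.subset_span ⟨g, f.hom a, ?_⟩)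
  erw [map_sub f.hom (A.ρ g a) a]
  erw [Rep.hom_comm_apply f g a]

/-- The coinvariants functor `Rep k G ⥤ ModuleCat k`, `A ↦ A_G = A / ⟨g • a - a⟩`. -/
noncomputable def coinvariantsFunctor : Rep.{0} k G ⥤ ModuleCat k where
  obj A := ModuleCat.of k (A ⧸ coinvariantsKer k G A)
  map f := ModuleCat.ofHom (Submodule.mapQ _ _ f.hom.toLinearMap (coinvariantsKer_le_comap k G f))
  map_id A := by
    apply ModuleCat.hom_ext
    apply Submodule.linearMap_qext
    ext x
    rfl
  map_comp f g := by
    apply ModuleCat.hom_ext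
    apply Submodule.linearMap_qext
    ext x
    rfl

instance : (coinvariantsFunctor k G).Additive where
  map_add := by
    intro A B f g
    apply ModuleCat.hom_ext
    apply Submodule.linearMap_qext
    ext x
    rfl

/-- Group homology `H_n(G, M)` with coefficients in a representation `ρ` of `G` on `M`, defined
as the `n`-th left derived functor of the coinvariants functor applied to `M`. -/
noncomputable def groupHomologyRep (V : Type) [AddCommGroup V] [Module k V]
    (ρ : Representation k G V) (n : ℕ) : ModuleCat k :=
  (((coinvariantsFunctor k G).leftDerived n).obj (Rep.of ρ))

end HS

namespace HS

variable {k : Type} [Field k]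

/-- The submodule `V_n(Q) = (Q^{⊗n})^{Σ_n}` of symmetric tensors of a `k`-module `Q`. -/
noncomputable def symmetricTensors (k : Type) [Field k] (Q : Type) [AddCommGroup Q] [Module k Q]
    (n : ℕ) : Submodule k (⨂[k] (_ : Fin n), Q) :=
  ⨅ σ : Equiv.Perm (Fin n),
    LinearMap.eqLocus
      ((PiTensorProduct.reindex k (fun _ : Fin n => Q) σ).toLinearMap) LinearMap.id

lemma map_mem_symmetricTensors (Q : Type) [AddCommGroup Q] [Module k Q]
    (n : ℕ) (f : Q →ₗ[k] Q) (x : ⨂[k] (_ : Fin n), Q) (hx : x ∈ symmetricTensors k Q n) :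
    (PiTensorProduct.map fun _ : Fin n => f) x ∈ symmetricTensors k Q n := by
  simp only [symmetricTensors, Submodule.mem_iInf, LinearMap.mem_eqLocus,
    LinearEquiv.coe_coe, LinearMap.id_coe, id_eq] at *
  intro σ
  have := PiTensorProduct.map_reindex (fun _ : Fin n => f) (σ : Fin n ≃ Fin n) x
  rw [← this, hx σ]

/-- The diagonal action of a linear endomorphism on symmetric tensors. -/
noncomputable def symmetricTensorsMap (Q : Type) [AddCommGroup Q] [Module k Q] (n : ℕ)
    (f : Q →ₗ[k] Q) : (symmetricTensors k Q n) →ₗ[k] (symmetricTensors k Q n) :=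
  (PiTensorProduct.map fun _ : Fin n => f).restrict
    (fun x hx => map_mem_symmetricTensors Q n f x hx)

lemma map_mem_exteriorPower (P : Type) [AddCommGroup P] [Module k P] (n : ℕ)
    (f : P →ₗ[k] P) (x : ExteriorAlgebra k P) (hx : x ∈ ⋀[k]^n P) :
    (ExteriorAlgebra.map f) x ∈ ⋀[k]^n P := by
  have h2 : Submodule.map (ExteriorAlgebra.map f).toLinearMap
      (LinearMap.range (ExteriorAlgebra.ι k (M := P))) ≤
        LinearMap.range (ExteriorAlgebra.ι k (M := P)) := by
    rintro y ⟨z, ⟨w, rfl⟩, rfl⟩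
    exact ⟨f w, (ExteriorAlgebra.map_apply_ι f w).symm⟩
  have h1 : ∀ m : ℕ, Submodule.map (ExteriorAlgebra.map f).toLinearMap
      ((LinearMap.range (ExteriorAlgebra.ι k (M := P))) ^ m) ≤
        (LinearMap.range (ExteriorAlgebra.ι k (M := P))) ^ m := by
    intro m
    rw [Submodule.map_pow]
    induction m with
    | zero => simp
    | succ m ih => rw [pow_succ, pow_succ]; exact mul_le_mul' ih h2
  exact h1 n ⟨x, hx, rfl⟩

/-- The functorial action of a linear endomorphism on the `n`-th exterior power. -/
noncomputable def exteriorPowerMap (P : Type) [AddCommGroup P] [Module k P] (n : ℕ)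
    (f : P →ₗ[k] P) : (⋀[k]^n P) →ₗ[k] (⋀[k]^n P) :=
  (ExteriorAlgebra.map f).toLinearMap.restrict
    (fun x hx => map_mem_exteriorPower P n f x hx)

section BigModule

variable (k : Type) [Field k] (ι : Type)
    (S : ι → Type) [∀ i, Ring (S i)] [∀ i, Algebra k (S i)]
    (P : ι → Type) [∀ i, AddCommGroup (P i)] [∀ i, Module k (P i)]
    (Q : ι → Type) [∀ i, AddCommGroup (Q i)] [∀ i, Module k (Q i)]
    (n₁ n₂ : ι → ℕ)

/-- The module `⊗_i (Λ^{n₁ i} (P i) ⊗ V_{n₂ i}(Q i))`. -/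
noncomputable def extSymTensor : Type :=
  ⨂[k] i, ((⋀[k]^(n₁ i) (P i)) ⊗[k] (symmetricTensors k (Q i) (n₂ i)))

noncomputable instance extSymTensor.instAddCommGroup :
    AddCommGroup (extSymTensor k ι P Q n₁ n₂) :=
  @PiTensorProduct.instAddCommGroup ι k _
    (fun i => ((⋀[k]^(n₁ i) (P i)) ⊗[k] (symmetricTensors k (Q i) (n₂ i))))
    (fun _ => inferInstance) (fun _ => inferInstance)

noncomputable instance extSymTensor.instModule : Module k (extSymTensor k ι P Q n₁ n₂) :=
  inferInstanceAs (Module k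
    (⨂[k] i, ((⋀[k]^(n₁ i) (P i)) ⊗[k] (symmetricTensors k (Q i) (n₂ i)))))

end BigModule

end HS

/-!
For `r ∈ R` let `E r` be the endomorphism of `M` by which `r` would act. Choose
`u₀, …, u_N ∈ R`, `N = ∑ᵢ (n_{i,1} + n_{i,2}) tᵢ`, all of whose nonempty subsums are units (possible
as the residue field is infinite). As a function of `T ⊆ {0, …, N}`, `E (∑_{j ∈ T} u_j)` is a
polynomial of degree `≤ N` in the indicators `[j ∈ T]`, so its alternating sum over all `T`
vanishes; since `E 0 = 0`, this gives `∑_{T ≠ ∅} (-1)^{|T|} ρ(∑_{j ∈ T} u_j) = 0`. As `R^×` is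
commutative, each `ρ(g)` induces the identity on `H_l(R^×, M)`, so `H_l` of the left side is
`∑_{T ≠ ∅} (-1)^{|T|} = -1` times the identity, and `H_l(R^×, M) = 0`.
-/

open CategoryTheory Finset

namespace Finset

lemma sum_Icc_univ_neg_one_pow_card {τ : Type*} [Fintype τ] [DecidableEq τ] {J : Finset τ}
    (hJ : J ≠ univ) : ∑ T ∈ Icc J univ, (-1 : ℤ) ^ #T = 0 := by
  have hne : (univ \ J).Nonempty := by
    rwa [sdiff_nonempty, univ_subset_iff, ← Ne]
  have hdisj : ∀ U ∈ (univ \ J).powerset, Disjoint J U := fun U hU =>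
    disjoint_of_subset_right (mem_powerset.1 hU) disjoint_sdiff
  rw [Icc_eq_image_powerset (subset_univ J), sum_image fun U hU V hV hUV => by
    rw [← union_sdiff_cancel_left (hdisj U hU), ← union_sdiff_cancel_left (hdisj V hV)]
    exact congrArg (· \ J) hUV]
  calc ∑ U ∈ (univ \ J).powerset, (-1 : ℤ) ^ #(J ∪ U)
      = ∑ U ∈ (univ \ J).powerset, (-1) ^ #J * (-1) ^ #U :=
        sum_congr rfl fun U hU => by rw [card_union_of_disjoint (hdisj U hU), pow_add]
    _ = 0 := by rw [← mul_sum, sum_powerset_neg_one_pow_card_of_nonempty hne, mul_zero]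

lemma sum_univ_erase_empty_neg_one_pow_card {τ : Type*} [Fintype τ] [DecidableEq τ]
    [Nonempty τ] : ∑ T ∈ univ.erase (∅ : Finset τ), (-1 : ℤ) ^ #T = -1 := by
  rw [sum_erase_eq_sub (mem_univ _), ← powerset_univ,
    sum_powerset_neg_one_pow_card_of_nonempty univ_nonempty]
  simp

end Finset

section SetPoly

variable {τ : Type*} {E E' : Type*} [AddCommMonoid E] [AddCommMonoid E']

/-- `F` is a polynomial of degree `≤ d` in the indicator coordinates of `T`: the monomial
attached to `J` is `∏_{j ∈ J} [j ∈ T]`, so `F T = ∑_{J ⊆ T} W J` with `W` supported on `#J ≤ d`. -/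
def IsSetPoly (d : ℕ) (F : Finset τ → E) : Prop :=
  ∃ W : Finset τ → E, (∀ J, d < #J → W J = 0) ∧ F = fun T => ∑ J ∈ T.powerset, W J

/-- `hA` says that `a` occurs in `A T` exactly when `u a ⊆ T`; the sum is regrouped by the
value of `u`. -/
lemma isSetPoly_sum_of_mem_iff {α : Type*} {d : ℕ} (A : Finset τ → Finset α)
    (u : α → Finset τ) (f : α → E) (hA : ∀ T a, a ∈ A T ↔ a ∈ A (u a) ∧ u a ⊆ T)
    (hf : ∀ a, d < #(u a) → f a = 0) : IsSetPoly d (fun T => ∑ a ∈ A T, f a) := by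
  classical
  refine ⟨fun L => ∑ a ∈ A L with u a = L, f a, fun L hL => ?_, ?_⟩
  · exact sum_eq_zero fun a ha => hf a (by rwa [(mem_filter.1 ha).2])
  · ext T
    rw [← sum_fiberwise_of_maps_to (g := u) (t := T.powerset)
      fun a ha => mem_powerset.2 ((hA T a).1 ha).2]
    refine sum_congr rfl fun L hL => sum_congr ?_ fun _ _ => rfl
    ext a
    simp only [mem_filter]
    constructor
    · rintro ⟨ha, rfl⟩
      exact ⟨((hA _ a).1 ha).1, rfl⟩
    · rintro ⟨ha, rfl⟩
      exact ⟨(hA T a).2 ⟨((hA _ a).1 ha).1, mem_powerset.1 hL⟩, rfl⟩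

lemma isSetPoly_const (d : ℕ) (e : E) : IsSetPoly d (fun _ : Finset τ => e) := by
  simpa using isSetPoly_sum_of_mem_iff (d := d) (fun _ : Finset τ => {()}) (fun _ => ∅)
    (fun _ => e) (by simp) (by simp)

lemma isSetPoly_sum (b : τ → E) : IsSetPoly 1 (fun T : Finset τ => ∑ j ∈ T, b j) :=
  isSetPoly_sum_of_mem_iff id (fun j => {j}) b (by simp) (by simp)

namespace IsSetPoly

variable {d : ℕ} {F G : Finset τ → E}

lemma add (hF : IsSetPoly d F) (hG : IsSetPoly d G) : IsSetPoly d (fun T => F T + G T) := by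
  obtain ⟨W, hW, rfl⟩ := hF
  obtain ⟨V, hV, rfl⟩ := hG
  exact ⟨W + V, fun J hJ => by simp [hW J hJ, hV J hJ], by ext; simp [sum_add_distrib]⟩

lemma map (hF : IsSetPoly d F) (f : E →+ E') : IsSetPoly d (fun T => f (F T)) := by
  obtain ⟨W, hW, rfl⟩ := hF
  exact ⟨fun J => f (W J), fun J hJ => by simp [hW J hJ], by ext; exact map_sum f W _⟩

lemma sum_neg_one_pow_smul_eq_zero {E : Type*} [AddCommGroup E] {F : Finset τ → E} [Fintype τ]
    (hF : IsSetPoly d F) (hd : d < Fintype.card τ) :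
    ∑ T, (-1 : ℤ) ^ #T • F T = 0 := by
  classical
  obtain ⟨W, hW, rfl⟩ := hF
  simp_rw [smul_sum]
  rw [sum_comm' (t' := univ) (s' := fun J => Icc J univ) (by simp)]
  refine sum_eq_zero fun J _ => ?_
  rw [← sum_smul]
  obtain rfl | hJ := eq_or_ne J univ
  · rw [hW univ (by rwa [card_univ]), smul_zero]
  · rw [sum_Icc_univ_neg_one_pow_card hJ, zero_smul]

variable {K : Type*} [CommSemiring K] {E₁ E₂ E₃ : Type*} [AddCommMonoid E₁] [AddCommMonoid E₂]
  [AddCommMonoid E₃] [Module K E₁] [Module K E₂] [Module K E₃]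

lemma bilin {d₁ d₂ : ℕ} {F : Finset τ → E₁} {G : Finset τ → E₂} (hF : IsSetPoly d₁ F)
    (hG : IsSetPoly d₂ G) (μ : E₁ →ₗ[K] E₂ →ₗ[K] E₃) :
    IsSetPoly (d₁ + d₂) (fun T => μ (F T) (G T)) := by
  classical
  obtain ⟨W, hW, rfl⟩ := hF
  obtain ⟨V, hV, rfl⟩ := hG
  have := isSetPoly_sum_of_mem_iff (d := d₁ + d₂) (fun T => T.powerset ×ˢ T.powerset)
    (fun p => p.1 ∪ p.2) (fun p => μ (W p.1) (V p.2))
    (by simp only [mem_product, mem_powerset, union_subset_iff, subset_union_left,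
      subset_union_right, and_self, true_and, implies_true]) fun p hp => ?_
  · convert this using 2 with T
    simp only [sum_product, map_sum, LinearMap.sum_apply]
    exact sum_comm
  · by_cases h₁ : d₁ < #p.1
    · simp [hW _ h₁]
    · have h₂ : d₂ < #p.2 := by have := card_union_le p.1 p.2; omega
      simp [hV _ h₂]

lemma multilinear {κ : Type*} [Fintype κ] {Z : κ → Type*} [∀ i, AddCommMonoid (Z i)]
    [∀ i, Module K (Z i)] [Module K E] {d : κ → ℕ} {F : ∀ i, Finset τ → Z i}
    (hF : ∀ i, IsSetPoly (d i) (F i)) (μ : MultilinearMap K Z E) :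
    IsSetPoly (∑ i, d i) (fun T => μ (fun i => F i T)) := by
  classical
  choose W hW hWF using hF
  have := isSetPoly_sum_of_mem_iff (d := ∑ i, d i)
    (fun T => Fintype.piFinset fun _ => T.powerset) (fun g => univ.sup g)
    (fun g => μ (fun i => W i (g i))) (by simp [Finset.le_sup]) fun g hg => ?_
  · simpa [hWF, MultilinearMap.map_sum_finset] using this
  · obtain ⟨i, -, hi⟩ := exists_lt_of_sum_lt (hg.trans_le (by
      rw [sup_eq_biUnion]; exact card_biUnion_le))
    exact μ.map_coord_zero i (hW i _ hi)

lemma pow {A : Type*} [Semiring A] {F : Finset τ → A} (hF : IsSetPoly d F) (t : ℕ) :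
    IsSetPoly (t * d) (fun T => F T ^ t) := by
  simpa [List.ofFn_const, List.prod_replicate] using
    multilinear (fun _ : Fin t => hF) (MultilinearMap.mkPiAlgebraFin ℕ t A)

end IsSetPoly

end SetPoly

section LinearFamilies

variable {τ K : Type*} [CommSemiring K] {M N M' N' : Type*} [AddCommMonoid M] [Module K M]
  [AddCommMonoid N] [Module K N] [AddCommMonoid M'] [Module K M'] [AddCommMonoid N'] [Module K N']

lemma isSetPoly_apply_of_span_eq_top {d : ℕ} (L : Finset τ → M →ₗ[K] N) {s : Set M}
    (hs : Submodule.span K s = ⊤) (h : ∀ x ∈ s, IsSetPoly d fun T => L T x) (x : M) :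
    IsSetPoly d fun T => L T x := by
  have hx : x ∈ Submodule.span K s := hs ▸ Submodule.mem_top
  induction hx using Submodule.span_induction with
  | mem x hx => exact h x hx
  | zero => simpa using isSetPoly_const d (0 : N)
  | add x y _ _ hx hy => simpa using hx.add hy
  | smul r x _ hx => simpa using hx.map (DistribSMul.toAddMonoidHom N r)

lemma isSetPoly_tensorProductMap_apply {d₁ d₂ : ℕ} (f : Finset τ → M →ₗ[K] M')
    (g : Finset τ → N →ₗ[K] N') (hf : ∀ x, IsSetPoly d₁ fun T => f T x)
    (hg : ∀ y, IsSetPoly d₂ fun T => g T y) (z : M ⊗[K] N) :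
    IsSetPoly (d₁ + d₂) fun T => TensorProduct.map (f T) (g T) z :=
  isSetPoly_apply_of_span_eq_top _ (TensorProduct.span_tmul_eq_top K M N) (by
    rintro _ ⟨x, y, rfl⟩
    simpa using (hf x).bilin (hg y) (TensorProduct.mk K M' N')) z

lemma isSetPoly_piTensorProductMap_apply {κ : Type*} [Fintype κ] {Z Z' : κ → Type*}
    [∀ i, AddCommMonoid (Z i)] [∀ i, Module K (Z i)] [∀ i, AddCommMonoid (Z' i)]
    [∀ i, Module K (Z' i)] {d : κ → ℕ} (f : Finset τ → ∀ i, Z i →ₗ[K] Z' i)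
    (hf : ∀ i x, IsSetPoly (d i) fun T => f T i x) (z : ⨂[K] i, Z i) :
    IsSetPoly (∑ i, d i) fun T => PiTensorProduct.map (f T) z :=
  isSetPoly_apply_of_span_eq_top _ PiTensorProduct.span_tprod_eq_top (by
    rintro _ ⟨x, rfl⟩
    simpa using IsSetPoly.multilinear (fun i => hf i (x i)) (PiTensorProduct.tprod K)) z

end LinearFamilies

lemma PiTensorProduct.map_eq_zero_of_eq_zero {K κ : Type*} [CommSemiring K] {Z Z' : κ → Type*}
    [∀ i, AddCommMonoid (Z i)] [∀ i, Module K (Z i)] [∀ i, AddCommMonoid (Z' i)]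
    [∀ i, Module K (Z' i)] {f : ∀ i, Z i →ₗ[K] Z' i} (i : κ) (hi : f i = 0) :
    PiTensorProduct.map f = 0 := by
  ext x
  simp [(PiTensorProduct.tprod K).map_coord_zero (m := fun i => f i (x i)) i (by simp [hi])]

lemma exists_forall_sum_ne_zero {F σ : Type*} [AddCommGroup F] [Infinite F]
    (s : Finset σ) : ∃ x : σ → F, ∀ T ⊆ s, T.Nonempty → ∑ j ∈ T, x j ≠ 0 := by
  classical
  induction s using Finset.induction_on with
  | empty => exact ⟨0, fun T hT hne => (hne.ne_empty (subset_empty.1 hT)).elim⟩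
  | insert a s _ ih =>
    obtain ⟨x, hx⟩ := ih
    obtain ⟨y, hy⟩ := Infinite.exists_notMem_finset (s.powerset.image fun T => -∑ j ∈ T, x j)
    refine ⟨Function.update x a y, fun T hT hne => ?_⟩
    by_cases haT : a ∈ T
    · rw [sum_update_of_mem haT, sdiff_singleton_eq_erase]
      intro h
      exact hy (mem_image.2 ⟨T.erase a, mem_powerset.2 (subset_insert_iff.1 hT),
        (eq_neg_of_add_eq_zero_left h).symm⟩)
    · rw [sum_update_of_notMem haT]
      exact hx T ((subset_insert_iff_of_notMem haT).1 hT) hne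

lemma IsLocalRing.exists_forall_isUnit_sum (R σ : Type*) [CommRing R] [IsLocalRing R]
    [Infinite (ResidueField R)] [Fintype σ] :
    ∃ u : σ → R, ∀ T : Finset σ, T.Nonempty → IsUnit (∑ j ∈ T, u j) := by
  classical
  obtain ⟨x, hx⟩ := exists_forall_sum_ne_zero (F := ResidueField R) (univ : Finset σ)
  choose u hu using fun j => residue_surjective (x j)
  refine ⟨u, fun T hT => ?_⟩
  rw [← residue_ne_zero_iff_isUnit, map_sum]
  simpa [hu] using hx T (subset_univ T) hT

namespace HS

variable {k : Type} [Field k] {τ : Type*}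

section Functoriality

variable {P : Type} [AddCommGroup P] [Module k P] {n : ℕ}

lemma exteriorPowerMap_ιMulti (f : P →ₗ[k] P) (v : Fin n → P) :
    exteriorPowerMap P n f (exteriorPower.ιMulti k n v) = exteriorPower.ιMulti k n (f ∘ v) :=
  Subtype.ext (ExteriorAlgebra.map_apply_ιMulti f v)

lemma exteriorPowerMap_zero (hn : n ≠ 0) : exteriorPowerMap P n (0 : P →ₗ[k] P) = 0 :=
  LinearMap.ext_on_range (exteriorPower.ιMulti_span k n P) fun v => by
    rw [exteriorPowerMap_ιMulti, LinearMap.zero_apply]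
    exact (exteriorPower.ιMulti k n).map_coord_zero ⟨0, Nat.pos_of_ne_zero hn⟩ rfl

lemma symmetricTensorsMap_zero (Q : Type) [AddCommGroup Q] [Module k Q] (hn : n ≠ 0) :
    symmetricTensorsMap Q n (0 : Q →ₗ[k] Q) = 0 := by
  ext y : 1
  apply Subtype.ext
  exact LinearMap.congr_fun (PiTensorProduct.map_eq_zero_of_eq_zero
    (f := fun _ : Fin n => (0 : Q →ₗ[k] Q)) ⟨0, Nat.pos_of_ne_zero hn⟩ rfl) (y : ⨂[k] _ : Fin n, Q)

lemma isSetPoly_exteriorPowerMap_apply {d : ℕ} (f : Finset τ → P →ₗ[k] P)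
    (hf : ∀ x, IsSetPoly d fun T => f T x) (y : ⋀[k]^n P) :
    IsSetPoly (n * d) fun T => exteriorPowerMap P n (f T) y :=
  isSetPoly_apply_of_span_eq_top _ (exteriorPower.ιMulti_span k n P) (by
    rintro _ ⟨v, rfl⟩
    simpa [exteriorPowerMap_ιMulti, Function.comp_def] using
      IsSetPoly.multilinear (fun i => hf (v i)) (exteriorPower.ιMulti k n).toMultilinearMap) y

lemma isSetPoly_symmetricTensorsMap_apply {Q : Type} [AddCommGroup Q] [Module k Q] {d : ℕ}
    (f : Finset τ → Q →ₗ[k] Q) (hf : ∀ x, IsSetPoly d fun T => f T x)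
    (y : symmetricTensors k Q n) :
    IsSetPoly (n * d) fun T => symmetricTensorsMap Q n (f T) y := by
  obtain ⟨π, hπ⟩ := LinearMap.exists_leftInverse_of_injective
    (symmetricTensors k Q n).subtype (Submodule.ker_subtype _)
  have hπy : ∀ T, π (PiTensorProduct.map (fun _ => f T) (y : ⨂[k] _ : Fin n, Q)) =
      symmetricTensorsMap Q n (f T) y := fun T =>
      LinearMap.congr_fun hπ (symmetricTensorsMap Q n (f T) y)
  simpa [hπy] using ((isSetPoly_piTensorProductMap_apply (d := fun _ : Fin n => d)
    (fun T _ => f T) fun _ => hf) (y : ⨂[k] _ : Fin n, Q)).map π.toAddMonoidHom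

lemma isSetPoly_lsmul_apply {S : Type*} [Ring S] [Algebra k S] [Module S P] [IsScalarTower k S P]
    {d : ℕ} {s : Finset τ → S} (hs : IsSetPoly d s) (v : P) :
    IsSetPoly d fun T => Algebra.lsmul k k P (s T) v :=
  hs.map ((smulAddHom S P).flip v)

end Functoriality

section ExtSymTensor

variable (k : Type) [Field k] {ι : Type}
  {S : ι → Type} [∀ i, Ring (S i)] [∀ i, Algebra k (S i)]
  (P : ι → Type) [∀ i, AddCommGroup (P i)] [∀ i, Module (S i) (P i)]
  [∀ i, Module k (P i)] [∀ i, IsScalarTower k (S i) (P i)]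
  (Q : ι → Type) [∀ i, AddCommGroup (Q i)] [∀ i, Module (S i) (Q i)]
  [∀ i, Module k (Q i)] [∀ i, IsScalarTower k (S i) (Q i)]
  (n₁ n₂ : ι → ℕ)

/-- `r ∈ R^×` acts on `⊗_i (Λ^{n₁ i} (P i) ⊗ V_{n₂ i}(Q i))` by this map with
`s i = φ i r ^ t i`. -/
noncomputable def extSymTensorScale (s : ∀ i, S i) :
    Module.End k (⨂[k] i, ⋀[k]^(n₁ i) (P i) ⊗[k] symmetricTensors k (Q i) (n₂ i)) :=
  PiTensorProduct.map fun i =>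
    TensorProduct.map (exteriorPowerMap (P i) (n₁ i) (Algebra.lsmul k k (P i) (s i)))
      (symmetricTensorsMap (Q i) (n₂ i) (Algebra.lsmul k k (Q i) (s i)))

variable {k P Q n₁ n₂}

lemma isSetPoly_extSymTensorScale_apply [Fintype ι] {d : ι → ℕ} (s : Finset τ → ∀ i, S i)
    (hs : ∀ i, IsSetPoly (d i) fun T => s T i)
    (x : ⨂[k] i, ⋀[k]^(n₁ i) (P i) ⊗[k] symmetricTensors k (Q i) (n₂ i)) :
    IsSetPoly (∑ i, (n₁ i + n₂ i) * d i) fun T => extSymTensorScale k P Q n₁ n₂ (s T) x := by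
  have hfactor : ∀ i w, IsSetPoly ((n₁ i + n₂ i) * d i) fun T =>
      TensorProduct.map (exteriorPowerMap (P i) (n₁ i) (Algebra.lsmul k k (P i) (s T i)))
        (symmetricTensorsMap (Q i) (n₂ i) (Algebra.lsmul k k (Q i) (s T i))) w := fun i w => by
    have h₁ := isSetPoly_exteriorPowerMap_apply (n := n₁ i) _
      (isSetPoly_lsmul_apply (k := k) (P := P i) (hs i))
    have h₂ := isSetPoly_symmetricTensorsMap_apply (n := n₂ i) _
      (isSetPoly_lsmul_apply (k := k) (P := Q i) (hs i))
    rw [add_mul]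
    exact isSetPoly_tensorProductMap_apply _ _ h₁ h₂ w
  exact isSetPoly_piTensorProductMap_apply _ hfactor x

lemma extSymTensorScale_zero [Nonempty ι] (hn : ∀ i, 1 ≤ n₁ i + n₂ i) :
    extSymTensorScale k P Q n₁ n₂ (0 : ∀ i, S i) = 0 := by
  let i := Classical.arbitrary ι
  refine PiTensorProduct.map_eq_zero_of_eq_zero i ?_
  simp only [Pi.zero_apply, map_zero]
  rcases Nat.eq_zero_or_pos (n₁ i) with h | h
  · rw [symmetricTensorsMap_zero _ (by have := hn i; omega), TensorProduct.map_zero_right]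
  · rw [exteriorPowerMap_zero h.ne', TensorProduct.map_zero_left]

end ExtSymTensor

end HS

section LeftDerived

variable {C D : Type*} [Category C] [Abelian C] [HasProjectiveResolutions C] [Category D]
  [Abelian D]

theorem CategoryTheory.Functor.leftDerived_map_app_eq_zsmul_id (F : C ⥤ D) [F.Additive]
    (η : 𝟭 C ⟶ 𝟭 C) (c : ℤ) (hη : ∀ X, F.map (η.app X) = c • 𝟙 (F.obj X)) (n : ℕ) (X : C) :
    (F.leftDerived n).map (η.app X) = c • 𝟙 ((F.leftDerived n).obj X) := by
  let P := projectiveResolution X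
  let γ : P.complex ⟶ P.complex :=
    { f := fun i => η.app (P.complex.X i)
      comm' := fun i j _ => (η.naturality (P.complex.d i j)).symm }
  have hγ : γ ≫ P.π = P.π ≫ (ChainComplex.single₀ C).map (η.app X) := by
    ext
    rw [HomologicalComplex.comp_f, HomologicalComplex.comp_f, ChainComplex.single₀_map_f_zero]
    exact (η.naturality (P.π.f 0)).symm
  have hFγ : (F.mapHomologicalComplex _).map γ = c • 𝟙 _ := by
    ext i
    exact hη (P.complex.X i)
  rw [F.leftDerived_map_eq n _ γ hγ, Functor.comp_map, hFγ, Functor.map_zsmul,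
    Functor.map_id, Preadditive.zsmul_comp, Preadditive.comp_zsmul, Category.id_comp,
    Iso.hom_inv_id]

end LeftDerived

namespace Rep

variable {k G : Type*} [CommRing k] [CommGroup G]

@[simps]
def applyAsHomNatTrans (g : G) : 𝟭 (Rep k G) ⟶ 𝟭 (Rep k G) where
  app A := A.applyAsHom g
  naturality _ _ f := (applyAsHom_comm f g).symm

end Rep

namespace HS

variable {k G : Type} [CommRing k] [CommGroup G]

lemma coinvariantsFunctor_map_applyAsHom (A : Rep k G) (g : G) :
    (coinvariantsFunctor k G).map (A.applyAsHom g) = 𝟙 _ := by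
  apply ModuleCat.hom_ext
  apply Submodule.linearMap_qext
  ext x
  exact (Submodule.Quotient.eq _).2 (Submodule.subset_span ⟨g, x, rfl⟩)

lemma leftDerived_coinvariantsFunctor_sum_smul_id_eq_zero (A : Rep k G) {α : Type}
    (s : Finset α) (c : α → ℤ) (g : α → G) (h : ∑ a ∈ s, c a • A.ρ (g a) = 0) (n : ℕ) :
    (∑ a ∈ s, c a) • 𝟙 (((coinvariantsFunctor k G).leftDerived n).obj A) = 0 := by
  let F := coinvariantsFunctor k G
  let η : 𝟭 (Rep k G) ⟶ 𝟭 (Rep k G) := ∑ a ∈ s, c a • Rep.applyAsHomNatTrans (g a)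
  have hη : ∀ X, F.map (η.app X) = (∑ a ∈ s, c a) • 𝟙 (F.obj X) := fun X => by
    simp [η, F, NatTrans.app_sum, Functor.map_sum,
      coinvariantsFunctor_map_applyAsHom, Finset.sum_smul]
  have hηA : η.app A = (0 : 𝟭 (Rep k G) ⟶ 𝟭 (Rep k G)).app A := by
    apply Rep.hom_ext
    apply Representation.IntertwiningMap.ext
    simp only [η, NatTrans.app_sum, NatTrans.app_zsmul, Rep.sum_hom, Rep.zsmul_hom,
      Representation.IntertwiningMap.toLinearMap_sum]
    exact h
  have h0 := F.leftDerived_map_app_eq_zsmul_id 0 0 (fun X => by simp) n A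
  rw [← F.leftDerived_map_app_eq_zsmul_id η _ hη n A, hηA, h0, zero_smul]

end HS

open HS in
/-- **(Lemma 3.2.)** Let `k` be a field, `R` a local ring with infinite residue field, and for
each `i` in a nonempty finite index set let `S i` be a `k`-algebra, `φ i : R → S i` a ring
homomorphism, `t i ≥ 1`, `P i` and `Q i` modules over `S i`, and `n₁ i + n₂ i ≥ 1`. Let `R^×`
act on `M = ⊗_i (Λ^{n₁ i} (P i) ⊗ V_{n₂ i}(Q i))` with `r` acting on each factor coming from
`P i` and `Q i` as multiplication by `φ i (r) ^ t i`. Then `H_l(R^×, M) = 0` for all `l ≥ 0`. -/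
theorem groupHomologyRep_units_tensor_ext_sym_isZero
    (k : Type) [Field k]
    (R : Type) [CommRing R] [IsLocalRing R] [Infinite (IsLocalRing.ResidueField R)]
    (ι : Type) [Fintype ι] [Nonempty ι]
    (S : ι → Type) [∀ i, Ring (S i)] [∀ i, Algebra k (S i)]
    (φ : ∀ i, R →+* S i) (t : ι → ℕ) (ht : ∀ i, 1 ≤ t i)
    (P : ι → Type) [∀ i, AddCommGroup (P i)] [∀ i, Module (S i) (P i)]
    [∀ i, Module k (P i)] [∀ i, IsScalarTower k (S i) (P i)]
    (Q : ι → Type) [∀ i, AddCommGroup (Q i)] [∀ i, Module (S i) (Q i)]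
    [∀ i, Module k (Q i)] [∀ i, IsScalarTower k (S i) (Q i)]
    (n₁ n₂ : ι → ℕ) (hn : ∀ i, 1 ≤ n₁ i + n₂ i)
    (ρ : Representation k Rˣ (extSymTensor k ι P Q n₁ n₂))
    (hρ : ∀ r : Rˣ, ρ r = PiTensorProduct.map fun i =>
      TensorProduct.map
        (exteriorPowerMap (P i) (n₁ i) (Algebra.lsmul k k (P i) ((φ i (r : R)) ^ t i)))
        (symmetricTensorsMap (Q i) (n₂ i) (Algebra.lsmul k k (Q i) ((φ i (r : R)) ^ t i)))) :
    ∀ l : ℕ, CategoryTheory.Limits.IsZero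
      (groupHomologyRep k Rˣ (extSymTensor k ι P Q n₁ n₂) ρ l) := by
  classical
  intro l
  set N := ∑ i, (n₁ i + n₂ i) * t i
  obtain ⟨u, hu⟩ := IsLocalRing.exists_forall_isUnit_sum R (Fin (N + 1))
  choose! v hv using hu
  let E : Finset (Fin (N + 1)) → Module.End k (extSymTensor k ι P Q n₁ n₂) := fun T =>
    extSymTensorScale k P Q n₁ n₂ fun i => φ i (∑ j ∈ T, u j) ^ t i
  have hs : ∀ i, IsSetPoly (t i) fun T : Finset (Fin (N + 1)) => φ i (∑ j ∈ T, u j) ^ t i :=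
    fun i => by simpa only [map_sum, mul_one] using (isSetPoly_sum fun j => φ i (u j)).pow (t i)
  have hE : ∑ T, (-1 : ℤ) ^ #T • E T = 0 := LinearMap.ext fun x => by
    rw [LinearMap.sum_apply, LinearMap.zero_apply]
    exact (isSetPoly_extSymTensorScale_apply _ hs x).sum_neg_one_pow_smul_eq_zero
      (by rw [Fintype.card_fin]; exact N.lt_succ_self)
  have hE₀ : E ∅ = 0 := by
    simp only [E, sum_empty, map_zero, zero_pow (Nat.one_le_iff_ne_zero.1 (ht _))]
    exact extSymTensorScale_zero hn
  have hρE : ∑ T ∈ univ.erase ∅, (-1 : ℤ) ^ #T • ρ (v T) = 0 := by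
    rw [← hE, ← sum_erase (s := univ) (a := ∅) (by rw [hE₀, smul_zero])]
    refine sum_congr rfl fun T hT => ?_
    rw [hρ, hv T (nonempty_iff_ne_empty.2 (ne_of_mem_erase hT))]
    rfl
  have h := leftDerived_coinvariantsFunctor_sum_smul_id_eq_zero (Rep.of ρ) _ _ _ hρE l
  rw [sum_univ_erase_empty_neg_one_pow_card, neg_one_smul, neg_eq_zero] at h
  exact (Limits.IsZero.iff_id_eq_zero _).2 h
end
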